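/- Let q = 2^n, G = AGL(2,q²), H_q = {(b, I₂) : b ∈ F_q²}. For every g = (a, A) in the normalizer N_G(H_q) (so A ∈ GL₂(F_q)) with g² ∈ H_q, there exists h ∈ H_q such that (gh)² is the identity. That is, Φ(N_G(H_q), H_q) holds. -/

import Mathlib

/-!
Write `g = (a, A)`. Conjugating the translation by `e_j` gives the translation by `A e_j`, so
`A` has entries in `F`; `g² ∈ H_q` gives `A² = 1` and `(1 + A) a ∈ F²`. For `h = (b, 1)` one has
`(gh)² = ((1 + A)(a + b), 1)`, so it suffices to solve `(1 + A) b = -(1 + A) a` with `b ∈ F²`.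
This system over `F` has the solution `b = -a` over `K`, hence one over `F`: an `F`-linear
retraction `K → F`, applied entrywise, carries solutions to solutions.
-/

open Matrix

/-- The affine group `F² ⋊ GL₂(F)`: pairs `(v, m)` with multiplication
`(a, A)(b, B) = (a + Ab, AB)`. -/
@[ext]
structure Aff (F : Type*) [Field F] where
  v : Fin 2 → F
  m : GL (Fin 2) F

namespace Aff

variable {F : Type*} [Field F]

instance : Mul (Aff F) :=
  ⟨fun g h => ⟨g.v + (g.m : Matrix (Fin 2) (Fin 2) F) *ᵥ h.v, g.m * h.m⟩⟩

instance : One (Aff F) := ⟨⟨0, 1⟩⟩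

instance : Inv (Aff F) :=
  ⟨fun g => ⟨-(((g.m⁻¹ : GL (Fin 2) F) : Matrix (Fin 2) (Fin 2) F) *ᵥ g.v), g.m⁻¹⟩⟩

@[simp] lemma mul_v (g h : Aff F) :
    (g * h).v = g.v + (g.m : Matrix (Fin 2) (Fin 2) F) *ᵥ h.v := rfl
@[simp] lemma mul_m (g h : Aff F) : (g * h).m = g.m * h.m := rfl
@[simp] lemma one_v : (1 : Aff F).v = 0 := rfl
@[simp] lemma one_m : (1 : Aff F).m = 1 := rfl
@[simp] lemma inv_v (g : Aff F) :
    (g⁻¹).v = -(((g.m⁻¹ : GL (Fin 2) F) : Matrix (Fin 2) (Fin 2) F) *ᵥ g.v) := rfl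
@[simp] lemma inv_m (g : Aff F) : (g⁻¹).m = g.m⁻¹ := rfl

instance : Group (Aff F) where
  mul_assoc a b c := by
    ext : 1
    · simp only [mul_v, mul_m, Units.val_mul, Matrix.mulVec_add, Matrix.mulVec_mulVec]
      abel
    · simp only [mul_m, mul_assoc]
  one_mul a := by ext : 1 <;> simp
  mul_one a := by ext : 1 <;> simp
  inv_mul_cancel a := by
    ext : 1 <;> simp [Matrix.mulVec_mulVec, ← Units.val_mul]

end Aff

/-- The subgroup `H_q` of translations by vectors with entries in the subfield. -/
def Hq (F K : Type*) [Field F] [Field K] [Algebra F K] : Set (Aff K) :=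
  {g : Aff K | (∀ i, g.v i ∈ Set.range (algebraMap F K)) ∧ g.m = 1}

theorem exists_mulVec_eq_of_forall_mem_range {F K ι κ : Type*} [Field F] [Ring K] [Nontrivial K]
    [Algebra F K] [Fintype κ] (M : Matrix ι κ K) (hM : ∀ i j, M i j ∈ Set.range (algebraMap F K))
    (c : ι → K) (hc : ∀ i, c i ∈ Set.range (algebraMap F K)) (x : κ → K) (hx : M *ᵥ x = c) :
    ∃ y : κ → K, (∀ j, y j ∈ Set.range (algebraMap F K)) ∧ M *ᵥ y = c := by
  obtain ⟨π, hπ⟩ := LinearMap.exists_leftInverse_of_injective (Algebra.linearMap F K)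
    (LinearMap.ker_eq_bot.mpr (algebraMap F K).injective)
  set ρ : K →ₗ[F] K := Algebra.linearMap F K ∘ₗ π
  have hρ_algebraMap (a : F) : ρ (algebraMap F K a) = algebraMap F K a := by
    simpa [ρ] using congrArg (algebraMap F K) (LinearMap.congr_fun hπ a)
  have hρ_mul {a : K} (ha : a ∈ Set.range (algebraMap F K)) (z : K) : ρ (a * z) = a * ρ z := by
    obtain ⟨a, rfl⟩ := ha
    rw [← Algebra.smul_def, map_smul, Algebra.smul_def]
  refine ⟨fun j => ρ (x j), fun j => ⟨π (x j), rfl⟩, funext fun i => ?_⟩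
  obtain ⟨c', hc'⟩ := hc i
  calc (M *ᵥ fun j => ρ (x j)) i = ρ ((M *ᵥ x) i) := by
        simp only [mulVec, dotProduct, map_sum, hρ_mul (hM i _)]
    _ = c i := by rw [hx, ← hc', hρ_algebraMap]

namespace Aff

variable {K : Type*} [Field K]

lemma mul_mk_one_mul_inv (g : Aff K) (v : Fin 2 → K) :
    g * ⟨v, 1⟩ * g⁻¹ = ⟨(g.m : Matrix (Fin 2) (Fin 2) K) *ᵥ v, 1⟩ := by
  have hA : (g.m : Matrix (Fin 2) (Fin 2) K) * (g.m⁻¹ : GL (Fin 2) K) = 1 := by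
    rw [← Units.val_mul, mul_inv_cancel, Units.val_one]
  ext : 1
  · simp only [mul_v, mul_m, inv_v, mul_one, mulVec_neg, mulVec_mulVec, hA, one_mulVec]
    abel
  · simp

lemma mul_self_v (g : Aff K) : (g * g).v = (1 + (g.m : Matrix (Fin 2) (Fin 2) K)) *ᵥ g.v := by
  simp [add_mulVec]

lemma mul_mk_one_mul_self (g : Aff K) (hg : g.m * g.m = 1) (b : Fin 2 → K) :
    (g * ⟨b, 1⟩) * (g * ⟨b, 1⟩) = ⟨(1 + (g.m : Matrix (Fin 2) (Fin 2) K)) *ᵥ (g.v + b), 1⟩ := by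
  have hA : (g.m : Matrix (Fin 2) (Fin 2) K) * g.m = 1 := by rw [← Units.val_mul, hg, Units.val_one]
  ext : 1
  · simp only [mul_v, mul_m, mulVec_add, add_mulVec, mulVec_mulVec, mul_one, hA, one_mulVec]
    abel
  · simpa using hg

end Aff

section Hq

variable {F K : Type*} [Field F] [Field K] [Algebra F K]

lemma mk_one_mem_Hq_iff {v : Fin 2 → K} :
    (⟨v, 1⟩ : Aff K) ∈ Hq F K ↔ ∀ i, v i ∈ Set.range (algebraMap F K) := by
  simp [Hq]

lemma entry_mem_range_of_normalizes_Hq {g : Aff K}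
    (hgN : (fun x => g * x * g⁻¹) '' Hq F K = Hq F K) (i j : Fin 2) :
    (g.m : Matrix (Fin 2) (Fin 2) K) i j ∈ Set.range (algebraMap F K) := by
  have hej : (⟨Pi.single j 1, 1⟩ : Aff K) ∈ Hq F K :=
    mk_one_mem_Hq_iff.mpr fun i => by
      rw [← Algebra.mem_bot, Pi.single_apply]; split_ifs <;> simp
  have hconj := hgN ▸ Set.mem_image_of_mem _ hej
  rw [Aff.mul_mk_one_mul_inv, mk_one_mem_Hq_iff] at hconj
  simpa [mulVec_single] using hconj i

end Hq

theorem stmt9_general {F K : Type*} [Field F] [Field K] [Algebra F K]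
    (g : Aff K)
    (hgN : (fun x => g * x * g⁻¹) '' Hq F K = Hq F K)
    (hg2 : g * g ∈ Hq F K) :
    ∃ h ∈ Hq F K, (g * h) * (g * h) = 1 := by
  set N := 1 + (g.m : Matrix (Fin 2) (Fin 2) K)
  have hN : ∀ i j, N i j ∈ Set.range (algebraMap F K) := fun i j => by
    simp only [N, Matrix.add_apply, ← Algebra.mem_bot]
    refine add_mem ?_ (entry_mem_range_of_normalizes_Hq hgN i j)
    rw [one_apply]; split_ifs <;> simp
  have hc : ∀ i, -(g * g).v i ∈ Set.range (algebraMap F K) := fun i => by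
    rw [← Algebra.mem_bot]; exact neg_mem (hg2.1 i)
  obtain ⟨b, hb, hNb⟩ := exists_mulVec_eq_of_forall_mem_range N hN (-(g * g).v) hc (-g.v)
    (by rw [mulVec_neg, Aff.mul_self_v])
  refine ⟨⟨b, 1⟩, mk_one_mem_Hq_iff.mpr hb, ?_⟩
  rw [Aff.mul_mk_one_mul_self g hg2.2, mulVec_add, hNb, Aff.mul_self_v, add_neg_cancel]
  rfl

/-- `Φ(N_G(H_q), H_q)` holds: every `g` in the normalizer of `H_q` in
`AGL(2,q²)` with `g² ∈ H_q` admits `h ∈ H_q` with `(gh)² = e`. -/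
theorem stmt9 {F K : Type*} [Field F] [Field K] [Algebra F K] [Fintype F]
    (n : ℕ) (hn : 1 ≤ n) (hF : Fintype.card F = 2 ^ n)
    (hK : Module.finrank F K = 2)
    (g : Aff K)
    (hgN : (fun x => g * x * g⁻¹) '' Hq F K = Hq F K)
    (hg2 : g * g ∈ Hq F K) :
    ∃ h ∈ Hq F K, (g * h) * (g * h) = 1 :=
  stmt9_general g hgN hg2
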